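/- arXiv:2109.10431 — 4 statements merged into one kernel-verified Lean document; each statement's English description precedes it below -/
import Mathlib

section
/- There exists a probability distribution of three {0,1}-valued random variables (S, X, M) such that M and X are independent (i.e., the entire population satisfies MCAR), but for each s ∈ {0,1}, M and X are not independent conditionally on the event {S = s} (i.e., neither group satisfies MCAR). -/
open MeasureTheory
open scoped ENNReal

/-- A triple ω = (s, x, m) encodes the values of the random variables
(S, X, M); S = ω.1 is the group attribute, X = ω.2.1 the feature, and
M = ω.2.2 the missingness indicator. -/
theorem exists_population_MCAR_not_groupwise_MCAR :
    ∃ μ : Measure (Bool × Bool × Bool), IsProbabilityMeasure μ ∧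
      -- the entire population satisfies MCAR: M and X are independent
      (∀ x m : Bool,
        μ {ω | ω.2.1 = x ∧ ω.2.2 = m}
          = μ {ω | ω.2.1 = x} * μ {ω | ω.2.2 = m}) ∧
      -- neither group satisfies MCAR: for each s, M and X are not independent
      -- conditionally on the event {S = s}
      (∀ s : Bool, ¬ (∀ x m : Bool,
        μ {ω | ω.1 = s ∧ ω.2.1 = x ∧ ω.2.2 = m} * μ {ω | ω.1 = s}
          = μ {ω | ω.1 = s ∧ ω.2.1 = x} * μ {ω | ω.1 = s ∧ ω.2.2 = m})) := by
  classical
  set μ : Measure (Bool × Bool × Bool) :=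
    (4 : ℝ≥0∞)⁻¹ • (Measure.dirac (false,false,false) + Measure.dirac (false,true,true)
      + Measure.dirac (true,false,true) + Measure.dirac (true,true,false)) with hμdef
  have hμ : ∀ s : Set (Bool × Bool × Bool), μ s =
      (4 : ℝ≥0∞)⁻¹ * ((if (false,false,false) ∈ s then 1 else 0)
        + (if (false,true,true) ∈ s then 1 else 0)
        + (if (true,false,true) ∈ s then 1 else 0)
        + (if (true,true,false) ∈ s then 1 else 0)) := by
    intro s
    have hs : MeasurableSet s := (Set.toFinite s).measurableSet
    simp [hμdef, Measure.dirac_apply' _ hs, Set.indicator_apply, mul_add]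
  have h4 : (4 : ℝ≥0∞)⁻¹ * 4 = 1 := by
    rw [ENNReal.inv_mul_cancel] <;> norm_num
  have hne : (4 : ℝ≥0∞)⁻¹ ≠ 0 := by simp
  have hnt : (4 : ℝ≥0∞)⁻¹ ≠ ⊤ := by simp
  refine ⟨μ, ⟨?_⟩, ?_, ?_⟩
  · rw [hμ]
    norm_num
    exact h4
  · intro x m
    rw [hμ, hμ, hμ]
    cases x <;> cases m <;>
      · norm_num [Set.mem_setOf_eq]
        rw [show ((4 : ℝ≥0∞)⁻¹ * 2) * (4⁻¹ * 2) = 4⁻¹ * (4⁻¹ * 4) by ring, h4, mul_one]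
  · intro s h
    have h00 := h false false
    rw [hμ, hμ, hμ, hμ] at h00
    cases s <;> norm_num [Set.mem_setOf_eq] at h00
    · -- h00 : 4⁻¹ * (4⁻¹ * 2) = 4⁻¹ * 4⁻¹
      rw [show (4 : ℝ≥0∞)⁻¹ * 4⁻¹ = 4⁻¹ * (4⁻¹ * 1) by ring,
        ENNReal.mul_right_inj hne hnt, ENNReal.mul_right_inj hne hnt] at h00
      exact absurd h00 (by norm_num)
end

section
/- With α* = p₀ m₀ + p₁ m₁, the discrimination risk of the optimal constant imputation satisfies the exact decomposition |∫ (α* − x)² dμ₀(x) − ∫ (α* − x)² dμ₁(x)| = |(p₁ − p₀)(m₁ − m₀)² + (V₀ − V₁)|. -/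
open MeasureTheory


lemma sq_int_decomp (μ : Measure ℝ) [IsProbabilityMeasure μ]
    (h : Integrable (fun x => x ^ 2) μ) (a m : ℝ) (hm : m = ∫ x, x ∂μ) :
    ∫ x, (a - x) ^ 2 ∂μ = (a - m) ^ 2 + ∫ x, (x - m) ^ 2 ∂μ := by
  have hx : Integrable (fun x : ℝ => x) μ :=
    MemLp.integrable one_le_two ((memLp_two_iff_integrable_sq measurable_id.aestronglyMeasurable).2 h)
  have hxm : Integrable (fun x : ℝ => x - m) μ := hx.sub (integrable_const m)
  have hsq : Integrable (fun x : ℝ => (x - m) ^ 2) μ := by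
    have e : (fun x : ℝ => (x - m) ^ 2)
        = fun x => x ^ 2 - (2 * m) * x + m ^ 2 := by funext x; ring
    rw [e]
    exact (h.sub (hx.const_mul _)).add (integrable_const _)
  calc ∫ x, (a - x) ^ 2 ∂μ
      = ∫ x, ((x - m) ^ 2 + ((2 * (m - a)) * (x - m) + (a - m) ^ 2)) ∂μ := by
        congr 1; funext x; ring
    _ = (a - m) ^ 2 + ∫ x, (x - m) ^ 2 ∂μ := by
        have hg : Integrable (fun x : ℝ => 2 * (m - a) * (x - m) + (a - m) ^ 2) μ :=
          (hxm.const_mul (2*(m-a))).add (integrable_const ((a-m)^2))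
        rw [integral_add hsq hg,
            integral_add (hxm.const_mul (2*(m-a))) (integrable_const ((a-m)^2)),
            integral_const_mul, integral_sub hx (integrable_const m)]
        simp [← hm, measure_univ]; ring


/-- With α* = p₀ m₀ + p₁ m₁, the discrimination risk of the optimal constant
imputation satisfies the exact decomposition
|∫ (α* − x)² dμ₀ − ∫ (α* − x)² dμ₁| = |(p₁ − p₀)(m₁ − m₀)² + (V₀ − V₁)|. -/
theorem discrimination_risk_of_optimal_imputation
    (μ₀ μ₁ : Measure ℝ) [IsProbabilityMeasure μ₀] [IsProbabilityMeasure μ₁]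
    (h₀ : Integrable (fun x => x ^ 2) μ₀) (h₁ : Integrable (fun x => x ^ 2) μ₁)
    (p₀ p₁ : ℝ) (hp₀ : p₀ ∈ Set.Icc (0:ℝ) 1) (hp₁ : p₁ ∈ Set.Icc (0:ℝ) 1)
    (hsum : p₀ + p₁ = 1)
    (m₀ m₁ V₀ V₁ αstar : ℝ)
    (hm₀ : m₀ = ∫ x, x ∂μ₀) (hm₁ : m₁ = ∫ x, x ∂μ₁)
    (hV₀ : V₀ = ∫ x, (x - m₀) ^ 2 ∂μ₀) (hV₁ : V₁ = ∫ x, (x - m₁) ^ 2 ∂μ₁)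
    (hαstar : αstar = p₀ * m₀ + p₁ * m₁) :
    |(∫ x, (αstar - x) ^ 2 ∂μ₀) - ∫ x, (αstar - x) ^ 2 ∂μ₁|
      = |(p₁ - p₀) * (m₁ - m₀) ^ 2 + (V₀ - V₁)| := by
  rw [sq_int_decomp μ₀ h₀ αstar m₀ hm₀, sq_int_decomp μ₁ h₁ αstar m₁ hm₁,
      ← hV₀, ← hV₁, hαstar]
  congr 1
  have hp : p₀ = 1 - p₁ := by linarith
  subst hp
  ring
end

section
/- Let Z be a measurable space, K > 0, and g : Z → ℝ measurable with 0 ≤ g(z) ≤ K for all z. For s ∈ {0,1} let pₛ ∈ [0,1], cₛ ∈ ℝ, and let Pₛ^train, Pₛ^test be probability measures on Z. Define the group-s risk under imputation regime t ∈ {train, test} by Lₛ^t = pₛ ∫ g dPₛ^t + (1 − pₛ) cₛ. Then |L₀^test − L₁^test| ≤ |L₀^train − L₁^train| + K (p₀ D_TV(P₀^train, P₀^test) + p₁ D_TV(P₁^train, P₁^test)). -/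
open MeasureTheory

/-- Total variation distance between two measures:
D_TV(P, Q) = ⨆ over measurable sets A of |P(A) − Q(A)|. -/
noncomputable def tvDist {Z : Type*} [MeasurableSpace Z]
    (P Q : Measure Z) : ℝ :=
  ⨆ A : {A : Set Z // MeasurableSet A}, |(P A.1).toReal - (Q A.1).toReal|

/-- The group-s population risk under a given imputation regime:
Lₛ = pₛ ∫ g dPₛ + (1 − pₛ) cₛ, where g is the (bounded) loss of the predictor
on imputed data, pₛ the missing probability of group s, and cₛ the group-s
expected loss on complete cases. -/
noncomputable def groupRisk {Z : Type*} [MeasurableSpace Z]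
    (p c : ℝ) (g : Z → ℝ) (P : Measure Z) : ℝ :=
  p * ∫ z, g z ∂P + (1 - p) * c

lemma tvDist_bddAbove {Z : Type*} [MeasurableSpace Z] (P Q : Measure Z)
    [IsProbabilityMeasure P] [IsProbabilityMeasure Q] :
    BddAbove (Set.range fun A : {A : Set Z // MeasurableSet A} =>
      |(P A.1).toReal - (Q A.1).toReal|) := by
  refine ⟨1, ?_⟩
  rintro _ ⟨A, rfl⟩
  have h1 : (P A.1).toReal ≤ 1 := by
    simpa using ENNReal.toReal_mono (by simp) (prob_le_one (μ := P) (s := A.1))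
  have h2 : (Q A.1).toReal ≤ 1 := by
    simpa using ENNReal.toReal_mono (by simp) (prob_le_one (μ := Q) (s := A.1))
  have h3 : 0 ≤ (P A.1).toReal := ENNReal.toReal_nonneg
  have h4 : 0 ≤ (Q A.1).toReal := ENNReal.toReal_nonneg
  rw [abs_sub_le_iff]
  constructor <;> linarith

lemma le_tvDist {Z : Type*} [MeasurableSpace Z] (P Q : Measure Z)
    [IsProbabilityMeasure P] [IsProbabilityMeasure Q]
    {A : Set Z} (hA : MeasurableSet A) :
    |(P A).toReal - (Q A).toReal| ≤ tvDist P Q :=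
  le_ciSup (tvDist_bddAbove P Q) ⟨A, hA⟩

lemma abs_integral_sub_le_tvDist {Z : Type*} [MeasurableSpace Z] (K : ℝ) (hK : 0 < K)
    (g : Z → ℝ) (hg : Measurable g)
    (hg0 : ∀ z, 0 ≤ g z) (hgK : ∀ z, g z ≤ K)
    (P Q : Measure Z) [IsProbabilityMeasure P] [IsProbabilityMeasure Q] :
    |(∫ z, g z ∂P) - ∫ z, g z ∂Q| ≤ K * tvDist P Q := by
  have hint : ∀ (μ : Measure Z) [IsProbabilityMeasure μ], Integrable g μ := by
    intro μ _
    exact ⟨hg.aestronglyMeasurable, HasFiniteIntegral.of_bounded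
      (C := K) (Filter.Eventually.of_forall fun z => by
        rw [Real.norm_eq_abs, abs_of_nonneg (hg0 z)]; exact hgK z)⟩
  have hPeq := (hint P).integral_eq_integral_Ioc_meas_le (M := K)
    (Filter.Eventually.of_forall hg0) (Filter.Eventually.of_forall hgK)
  have hQeq := (hint Q).integral_eq_integral_Ioc_meas_le (M := K)
    (Filter.Eventually.of_forall hg0) (Filter.Eventually.of_forall hgK)
  rw [hPeq, hQeq]; simp only [measureReal_def]
  have hmeasset : ∀ t : ℝ, MeasurableSet {a : Z | t ≤ g a} := fun t =>
    hg measurableSet_Ici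
  have hintOn : ∀ (μ : Measure Z) [IsProbabilityMeasure μ],
      IntegrableOn (fun t => (μ {a : Z | t ≤ g a}).toReal) (Set.Ioc 0 K) := by
    intro μ _
    have h1 : volume (Set.Ioc (0:ℝ) K) ≠ ⊤ := by
      rw [Real.volume_Ioc]; exact ENNReal.ofReal_ne_top
    have hanti : Antitone (fun t : ℝ => μ {a : Z | t ≤ g a}) :=
      fun s t hst => measure_mono fun a ha => hst.trans ha
    have h2 : AEStronglyMeasurable (fun t : ℝ => (μ {a : Z | t ≤ g a}).toReal) volume :=
      (hanti.measurable.ennreal_toReal).aestronglyMeasurable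
    have h3 : ∀ᵐ t : ℝ ∂(volume.restrict (Set.Ioc 0 K)),
        ‖(μ {a : Z | t ≤ g a}).toReal‖ ≤ 1 := by
      refine Filter.Eventually.of_forall fun t => ?_
      rw [Real.norm_eq_abs, abs_of_nonneg ENNReal.toReal_nonneg]
      simpa using ENNReal.toReal_mono (by simp) (prob_le_one (μ := μ) (s := {a | t ≤ g a}))
    exact Measure.integrableOn_of_bounded h1 h2 h3
  rw [← integral_sub (hintOn P) (hintOn Q)]
  calc |∫ t in Set.Ioc 0 K, ((P {a | t ≤ g a}).toReal - (Q {a | t ≤ g a}).toReal)|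
      ≤ ∫ t in Set.Ioc 0 K, |(P {a | t ≤ g a}).toReal - (Q {a | t ≤ g a}).toReal| :=
        (Real.norm_eq_abs _ ▸ norm_integral_le_integral_norm _).trans_eq (by simp [Real.norm_eq_abs])
    _ ≤ ∫ _t in Set.Ioc 0 K, tvDist P Q := by
        apply integral_mono_of_nonneg
          (Filter.Eventually.of_forall fun t => abs_nonneg _)
          (integrable_const _)
          (Filter.Eventually.of_forall fun t => le_tvDist P Q (hmeasset t))
    _ = K * tvDist P Q := by
        rw [setIntegral_const]
        simp [Real.volume_Ioc, ENNReal.toReal_ofReal hK.le, smul_eq_mul, hK.le]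

/-- Mismatched imputation at train and test time: the test-time discrimination
risk is at most the train-time discrimination risk plus
K (p₀ D_TV(P₀ᵗʳ, P₀ᵗᵉ) + p₁ D_TV(P₁ᵗʳ, P₁ᵗᵉ)). -/
theorem discrimination_risk_mismatched_imputation
    {Z : Type*} [MeasurableSpace Z] (K : ℝ) (hK : 0 < K)
    (g : Z → ℝ) (hg : Measurable g)
    (hg0 : ∀ z, 0 ≤ g z) (hgK : ∀ z, g z ≤ K)
    (p₀ p₁ : ℝ) (hp₀ : p₀ ∈ Set.Icc (0:ℝ) 1) (hp₁ : p₁ ∈ Set.Icc (0:ℝ) 1)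
    (c₀ c₁ : ℝ)
    (P₀train P₀test P₁train P₁test : Measure Z)
    [IsProbabilityMeasure P₀train] [IsProbabilityMeasure P₀test]
    [IsProbabilityMeasure P₁train] [IsProbabilityMeasure P₁test] :
    |groupRisk p₀ c₀ g P₀test - groupRisk p₁ c₁ g P₁test|
      ≤ |groupRisk p₀ c₀ g P₀train - groupRisk p₁ c₁ g P₁train|
        + K * (p₀ * tvDist P₀train P₀test + p₁ * tvDist P₁train P₁test) := by
  have e0 : |(∫ z, g z ∂P₀test) - ∫ z, g z ∂P₀train| ≤ K * tvDist P₀train P₀test := by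
    rw [abs_sub_comm]; exact abs_integral_sub_le_tvDist K hK g hg hg0 hgK P₀train P₀test
  have e1 : |(∫ z, g z ∂P₁test) - ∫ z, g z ∂P₁train| ≤ K * tvDist P₁train P₁test := by
    rw [abs_sub_comm]; exact abs_integral_sub_le_tvDist K hK g hg hg0 hgK P₁train P₁test
  simp only [groupRisk]
  set A := (p₀ * ∫ z, g z ∂P₀train + (1 - p₀) * c₀) -
    (p₁ * ∫ z, g z ∂P₁train + (1 - p₁) * c₁) with hA
  have key : (p₀ * ∫ z, g z ∂P₀test + (1 - p₀) * c₀) -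
      (p₁ * ∫ z, g z ∂P₁test + (1 - p₁) * c₁)
      = A + (p₀ * ((∫ z, g z ∂P₀test) - ∫ z, g z ∂P₀train)
          - p₁ * ((∫ z, g z ∂P₁test) - ∫ z, g z ∂P₁train)) := by
    rw [hA]; ring
  rw [key]
  have tri : |A + (p₀ * ((∫ z, g z ∂P₀test) - ∫ z, g z ∂P₀train)
          - p₁ * ((∫ z, g z ∂P₁test) - ∫ z, g z ∂P₁train))|
      ≤ |A| + (|p₀ * ((∫ z, g z ∂P₀test) - ∫ z, g z ∂P₀train)|
          + |p₁ * ((∫ z, g z ∂P₁test) - ∫ z, g z ∂P₁train)|) :=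
    (abs_add_le _ _).trans (by gcongr; exact abs_sub _ _)
  refine tri.trans ?_
  rw [abs_mul, abs_mul, abs_of_nonneg hp₀.1, abs_of_nonneg hp₁.1]
  have m0 : p₀ * |(∫ z, g z ∂P₀test) - ∫ z, g z ∂P₀train| ≤ p₀ * (K * tvDist P₀train P₀test) :=
    mul_le_mul_of_nonneg_left e0 hp₀.1
  have m1 : p₁ * |(∫ z, g z ∂P₁test) - ∫ z, g z ∂P₁train| ≤ p₁ * (K * tvDist P₁train P₁test) :=
    mul_le_mul_of_nonneg_left e1 hp₁.1
  nlinarith [abs_nonneg A]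
end

section
/- The bound |L₀^test − L₁^test| ≤ |L₀^train − L₁^train| + K (p₀ D_TV(P₀^train, P₀^test) + p₁ D_TV(P₁^train, P₁^test)) is achieved with equality in the following explicit instance: take Z = (ℝ × ℝ) × ℝ, K = 1, p₀ = p₁ = 1, c₀ = c₁ = 0, g(((x₁, x₂), y)) = 1 if (if x₂ ≥ 1/2 then 1 else 0) ≠ y and 0 otherwise, and take P₀^train = δ_{((0,0),0)}, P₀^test = δ_{((0,1),0)}, P₁^train = P₁^test = δ_{((1,0),0)} (Dirac measures). Then L₀^train = L₁^train = 0, L₀^test = 1, L₁^test = 0, D_TV(P₀^train, P₀^test) = 1, D_TV(P₁^train, P₁^test) = 0, and both sides of the bound equal 1. -/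
open MeasureTheory

/-- The 0–1 loss z = ((x₁, x₂), y) ↦ 𝟙[h(x₁, x₂) ≠ y] of the classifier
h(x₁, x₂) = 𝟙[x₂ ≥ 1/2]. -/
noncomputable def zeroOneLoss : (ℝ × ℝ) × ℝ → ℝ := fun z =>
  if (if z.1.2 ≥ 1/2 then (1:ℝ) else 0) ≠ z.2 then 1 else 0

lemma zeroOneLoss_meas : Measurable zeroOneLoss := by
  unfold zeroOneLoss
  apply Measurable.ite _ measurable_const measurable_const
  apply MeasurableSet.compl
  have : Measurable fun z : (ℝ × ℝ) × ℝ => (if z.1.2 ≥ 1/2 then (1:ℝ) else 0) := by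
    apply Measurable.ite _ measurable_const measurable_const
    exact measurableSet_le measurable_const (measurable_fst.snd)
  exact measurableSet_eq_fun this measurable_snd

lemma dirac_bound {Z : Type*} [MeasurableSpace Z] (a b : Z)
    (A : {A : Set Z // MeasurableSet A}) :
    |(Measure.dirac a A.1).toReal - (Measure.dirac b A.1).toReal| ≤ 1 := by
  have h1 : (Measure.dirac a A.1).toReal ≤ 1 := by
    simp [Measure.dirac_apply' _ A.2]; classical rw [Set.indicator_apply]; split <;> simp
  have h2 : (Measure.dirac b A.1).toReal ≤ 1 := by
    simp [Measure.dirac_apply' _ A.2]; classical rw [Set.indicator_apply]; split <;> simp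
  have h3 : (0:ℝ) ≤ (Measure.dirac a A.1).toReal := ENNReal.toReal_nonneg
  have h4 : (0:ℝ) ≤ (Measure.dirac b A.1).toReal := ENNReal.toReal_nonneg
  rw [abs_sub_le_iff]; constructor <;> linarith

lemma tvDist_self {Z : Type*} [MeasurableSpace Z] (P : Measure Z) : tvDist P P = 0 := by
  unfold tvDist; simp

lemma tvDist_dirac_ne {Z : Type*} [MeasurableSpace Z] [MeasurableSingletonClass Z]
    (a b : Z) (h : a ≠ b) : tvDist (Measure.dirac a) (Measure.dirac b) = 1 := by
  unfold tvDist
  apply le_antisymm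
  · exact Real.iSup_le (fun A => dirac_bound a b A) zero_le_one
  · have hb : BddAbove (Set.range fun A : {A : Set Z // MeasurableSet A} =>
        |(Measure.dirac a A.1).toReal - (Measure.dirac b A.1).toReal|) :=
      ⟨1, by rintro x ⟨A, rfl⟩; exact dirac_bound a b A⟩
    have := le_ciSup hb ⟨{a}, measurableSet_singleton a⟩
    convert this using 1
    simp [Measure.dirac_apply' _ (measurableSet_singleton a), h.symm]

/-- Explicit instance achieving equality in the mismatched-imputation bound:
K = 1, p₀ = p₁ = 1, c₀ = c₁ = 0, g the 0–1 loss of h(x₁,x₂) = 𝟙[x₂ ≥ 1/2],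
P₀ᵗʳ = δ_{((0,0),0)}, P₀ᵗᵉ = δ_{((0,1),0)}, P₁ᵗʳ = P₁ᵗᵉ = δ_{((1,0),0)}. -/
theorem mismatched_imputation_bound_tight :
    groupRisk 1 0 zeroOneLoss (Measure.dirac ((((0:ℝ), (0:ℝ)), (0:ℝ)))) = 0 ∧
    groupRisk 1 0 zeroOneLoss (Measure.dirac ((((1:ℝ), (0:ℝ)), (0:ℝ)))) = 0 ∧
    groupRisk 1 0 zeroOneLoss (Measure.dirac ((((0:ℝ), (1:ℝ)), (0:ℝ)))) = 1 ∧
    -- P₁ᵗᵉ = P₁ᵗʳ, so L₁ᵗᵉ = 0 as well (second conjunct); total variations: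
    tvDist (Measure.dirac ((((0:ℝ), (0:ℝ)), (0:ℝ))))
      (Measure.dirac ((((0:ℝ), (1:ℝ)), (0:ℝ)))) = 1 ∧
    tvDist (Measure.dirac ((((1:ℝ), (0:ℝ)), (0:ℝ))))
      (Measure.dirac ((((1:ℝ), (0:ℝ)), (0:ℝ)))) = 0 ∧
    -- both sides of the bound equal 1:
    |groupRisk 1 0 zeroOneLoss (Measure.dirac ((((0:ℝ), (1:ℝ)), (0:ℝ))))
      - groupRisk 1 0 zeroOneLoss (Measure.dirac ((((1:ℝ), (0:ℝ)), (0:ℝ))))| = 1 ∧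
    |groupRisk 1 0 zeroOneLoss (Measure.dirac ((((0:ℝ), (0:ℝ)), (0:ℝ))))
      - groupRisk 1 0 zeroOneLoss (Measure.dirac ((((1:ℝ), (0:ℝ)), (0:ℝ))))|
      + 1 * ((1:ℝ) * tvDist (Measure.dirac ((((0:ℝ), (0:ℝ)), (0:ℝ))))
            (Measure.dirac ((((0:ℝ), (1:ℝ)), (0:ℝ))))
          + 1 * tvDist (Measure.dirac ((((1:ℝ), (0:ℝ)), (0:ℝ))))
            (Measure.dirac ((((1:ℝ), (0:ℝ)), (0:ℝ))))) = 1 := by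
  have hi : ∀ z : (ℝ × ℝ) × ℝ, groupRisk 1 0 zeroOneLoss (Measure.dirac z) = zeroOneLoss z := by
    intro z
    simp [groupRisk, integral_dirac' _ _ zeroOneLoss_meas.stronglyMeasurable]
  have h1 : zeroOneLoss (((0:ℝ),(0:ℝ)),(0:ℝ)) = 0 := by norm_num [zeroOneLoss]
  have h2 : zeroOneLoss (((1:ℝ),(0:ℝ)),(0:ℝ)) = 0 := by norm_num [zeroOneLoss]
  have h3 : zeroOneLoss (((0:ℝ),(1:ℝ)),(0:ℝ)) = 1 := by norm_num [zeroOneLoss]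
  have htv1 : tvDist (Measure.dirac ((((0:ℝ),(0:ℝ)),(0:ℝ))))
      (Measure.dirac ((((0:ℝ),(1:ℝ)),(0:ℝ)))) = 1 := by
    apply tvDist_dirac_ne
    intro h; exact zero_ne_one (congrArg (fun p => p.1.2) h)
  have htv2 : tvDist (Measure.dirac ((((1:ℝ),(0:ℝ)),(0:ℝ))))
      (Measure.dirac ((((1:ℝ),(0:ℝ)),(0:ℝ)))) = 0 := tvDist_self _
  refine ⟨by rw [hi, h1], by rw [hi, h2], by rw [hi, h3], htv1, htv2, ?_, ?_⟩
  · rw [hi, hi, h2, h3]; norm_num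
  · rw [hi, hi, h1, h2, htv1, htv2]; norm_num
end
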